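/- arXiv:1501.03787 — 3 statements merged into one kernel-verified Lean document; each statement's English description precedes it below -/
import Mathlib

section
/- Suppose j is an involution of the set of real quadratic irrationals such that for every M ∈ PGL(2,ℤ) there is φ(M) ∈ PGL(2,ℤ) with j(M·x) = φ(M)·j(x) for all quadratic irrationals x, where φ is a group automorphism of PGL(2,ℤ). Then j commutes with Galois conjugation: j(α*) = (j(α))* for every real quadratic irrational α. -/
/-- A real number is a quadratic irrational. -/
def IsQuadIrr (x : ℝ) : Prop :=
  Irrational x ∧ ∃ a b c : ℚ, a ≠ 0 ∧ (a : ℝ) * x ^ 2 + (b : ℝ) * x + (c : ℝ) = 0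

/-- `β` is the Galois conjugate of `α`: they are distinct quadratic irrationals
which are the two roots of the same rational quadratic. -/
def IsGaloisConjPair (α β : ℝ) : Prop :=
  α ≠ β ∧ IsQuadIrr α ∧ IsQuadIrr β ∧
    ∃ a b c : ℚ, a ≠ 0 ∧ (a : ℝ) * α ^ 2 + (b : ℝ) * α + (c : ℝ) = 0 ∧
      (a : ℝ) * β ^ 2 + (b : ℝ) * β + (c : ℝ) = 0

/-- The Möbius action of an integral invertible matrix on ℝ. -/
noncomputable def moebius (M : Matrix.GeneralLinearGroup (Fin 2) ℤ) (x : ℝ) : ℝ :=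
  (((M : Matrix (Fin 2) (Fin 2) ℤ) 0 0 : ℝ) * x + ((M : Matrix (Fin 2) (Fin 2) ℤ) 0 1 : ℝ)) /
    (((M : Matrix (Fin 2) (Fin 2) ℤ) 1 0 : ℝ) * x + ((M : Matrix (Fin 2) (Fin 2) ℤ) 1 1 : ℝ))

section AUX

lemma exists_int_coeffs (a b c : ℚ) (ha : a ≠ 0) :
    ∃ A B C : ℤ, A ≠ 0 ∧ ∀ x : ℝ,
      (a : ℝ) * x ^ 2 + (b : ℝ) * x + (c : ℝ) = 0 →
      (A : ℝ) * x ^ 2 + (B : ℝ) * x + (C : ℝ) = 0 := by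
  refine ⟨a.num * b.den * c.den, b.num * a.den * c.den, c.num * a.den * b.den, ?_, ?_⟩
  · have h1 : a.num ≠ 0 := Rat.num_ne_zero.mpr ha
    have h2 : (b.den : ℤ) ≠ 0 := by exact_mod_cast b.den_nz
    have h3 : (c.den : ℤ) ≠ 0 := by exact_mod_cast c.den_nz
    exact mul_ne_zero (mul_ne_zero h1 h2) h3
  · intro x hx
    have key : ∀ q : ℚ, ((q.num : ℝ)) = (q : ℝ) * (q.den : ℝ) := by
      intro q
      rw [← Rat.cast_intCast, ← Rat.num_div_den q]
      push_cast
      rw [Rat.num_div_den]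
      field_simp
    push_cast
    rw [key a, key b, key c]
    linear_combination ((a.den : ℝ) * b.den * c.den) * hx

lemma disc_pos_not_square (A B C : ℤ) (hA : A ≠ 0) (x : ℝ) (hx : Irrational x)
    (h : (A : ℝ) * x ^ 2 + (B : ℝ) * x + (C : ℝ) = 0) :
    0 < B ^ 2 - 4 * A * C ∧ ¬ IsSquare (B ^ 2 - 4 * A * C) := by
  have hsq : (2 * (A : ℝ) * x + B) ^ 2 = ((B ^ 2 - 4 * A * C : ℤ) : ℝ) := by
    push_cast
    linear_combination (4 * (A : ℝ)) * h
  have hrat : ∀ r : ℤ, 2 * (A : ℝ) * x + B ≠ (r : ℝ) := by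
    intro r hr
    apply hx
    refine ⟨((r - B : ℤ) : ℚ) / ((2 * A : ℤ) : ℚ), ?_⟩
    have h2A : (2 * (A : ℝ)) ≠ 0 := by
      simp [hA]
    push_cast
    field_simp
    linarith
  constructor
  · rcases lt_trichotomy (B ^ 2 - 4 * A * C) 0 with hlt | heq | hgt
    · exfalso
      have : ((B ^ 2 - 4 * A * C : ℤ) : ℝ) < 0 := by exact_mod_cast hlt
      nlinarith [sq_nonneg (2 * (A : ℝ) * x + B)]
    · exfalso
      have h0 : (2 * (A : ℝ) * x + B) ^ 2 = 0 := by rw [hsq, heq]; simp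
      have := pow_eq_zero_iff (n := 2) (by norm_num) |>.mp h0
      exact hrat 0 (by simpa using this)
    · exact hgt
  · rintro ⟨r, hr⟩
    have : (2 * (A : ℝ) * x + B) ^ 2 = (r : ℝ) ^ 2 := by
      rw [hsq, hr]; push_cast; ring
    rcases sq_eq_sq_iff_eq_or_eq_neg.mp this with h1 | h1
    · exact hrat r h1
    · exact hrat (-r) (by rw [h1]; push_cast; ring)

def mkGL (p q r s : ℤ) (h : p * s - q * r = 1) : Matrix.GeneralLinearGroup (Fin 2) ℤ :=
  ⟨!![p, q; r, s], !![s, -q; -r, p],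
    by ext i j; fin_cases i <;> fin_cases j <;>
      simp [Matrix.mul_apply, Fin.sum_univ_two] <;> linarith,
    by ext i j; fin_cases i <;> fin_cases j <;>
      simp [Matrix.mul_apply, Fin.sum_univ_two] <;> linarith⟩

lemma mkGL_val (p q r s : ℤ) (h : p * s - q * r = 1) :
    ((mkGL p q r s h : Matrix.GeneralLinearGroup (Fin 2) ℤ) : Matrix (Fin 2) (Fin 2) ℤ)
      = !![p, q; r, s] := rfl

/-- Fixed point dichotomy for the Möbius action on an irrational number. -/
lemma fixed_point_cases (N : Matrix.GeneralLinearGroup (Fin 2) ℤ) (z : ℝ)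
    (hz : Irrational z) (hfix : moebius N z = z) :
    (((N : Matrix (Fin 2) (Fin 2) ℤ) 1 0) ≠ 0 ∧
      (((N : Matrix (Fin 2) (Fin 2) ℤ) 1 0 : ℝ)) * z ^ 2 +
        (((N : Matrix (Fin 2) (Fin 2) ℤ) 1 1 - (N : Matrix (Fin 2) (Fin 2) ℤ) 0 0 : ℤ) : ℝ) * z +
        ((-(N : Matrix (Fin 2) (Fin 2) ℤ) 0 1 : ℤ) : ℝ) = 0) ∨
    ((N : Matrix (Fin 2) (Fin 2) ℤ) 1 0 = 0 ∧ (N : Matrix (Fin 2) (Fin 2) ℤ) 0 1 = 0 ∧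
      (N : Matrix (Fin 2) (Fin 2) ℤ) 0 0 = (N : Matrix (Fin 2) (Fin 2) ℤ) 1 1) := by
  set A := (N : Matrix (Fin 2) (Fin 2) ℤ) 0 0 with hA
  set B := (N : Matrix (Fin 2) (Fin 2) ℤ) 0 1 with hB
  set C := (N : Matrix (Fin 2) (Fin 2) ℤ) 1 0 with hC
  set D := (N : Matrix (Fin 2) (Fin 2) ℤ) 1 1 with hD
  have hden : (C : ℝ) * z + (D : ℝ) ≠ 0 := by
    intro h0
    rw [moebius, ← hA, ← hB, ← hC, ← hD, h0, div_zero] at hfix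
    exact hz ⟨0, by simp [hfix]⟩
  have heq : (C : ℝ) * z ^ 2 + ((D - A : ℤ) : ℝ) * z + ((-B : ℤ) : ℝ) = 0 := by
    rw [moebius, ← hA, ← hB, ← hC, ← hD, div_eq_iff hden] at hfix
    push_cast
    linear_combination -hfix
  by_cases hC0 : C = 0
  · right
    have hkey : ((D : ℝ) - A) * z = (B : ℝ) := by
      rw [hC0] at heq; push_cast at heq; nlinarith [heq]
    have hDA : D = A := by
      by_contra hDA
      have hne : ((D : ℝ) - A) ≠ 0 :=
        sub_ne_zero.mpr (Int.cast_injective.ne hDA)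
      apply hz
      refine ⟨(B : ℚ) / ((D : ℚ) - (A : ℚ)), ?_⟩
      push_cast
      rw [div_eq_iff hne, mul_comm]
      exact hkey.symm
    have hB0 : B = 0 := by
      have : (B : ℝ) = 0 := by rw [← hkey, hDA]; ring
      exact_mod_cast this
    exact ⟨hC0, hB0, hDA.symm⟩
  · left
    exact ⟨hC0, heq⟩

end AUX

lemma moebius_mk (M : Matrix.GeneralLinearGroup (Fin 2) ℤ) (p q r s : ℤ)
    (h : (M : Matrix (Fin 2) (Fin 2) ℤ) = !![p, q; r, s]) (z : ℝ) :
    moebius M z = ((p : ℝ) * z + (q : ℝ)) / ((r : ℝ) * z + (s : ℝ)) := by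
  rw [moebius, h]
  norm_num

/-- If an involution `j` of the set of real quadratic irrationals is equivariant
for the Möbius action of `PGL(2,ℤ)` via a group automorphism `φ`
(`j(M·x) = φ(M)·j(x)`), then `j` commutes with Galois conjugation:
`j(α*) = (j α)*`. -/
theorem jimm_commutes_with_galois (j : ℝ → ℝ)
    (hmap : ∀ x : ℝ, IsQuadIrr x → IsQuadIrr (j x))
    (hinv : ∀ x : ℝ, IsQuadIrr x → j (j x) = x)
    (φ : Matrix.GeneralLinearGroup (Fin 2) ℤ ≃* Matrix.GeneralLinearGroup (Fin 2) ℤ)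
    (hequiv : ∀ (M : Matrix.GeneralLinearGroup (Fin 2) ℤ) (x : ℝ), IsQuadIrr x →
      j (moebius M x) = moebius (φ M) (j x)) :
    ∀ α β : ℝ, IsGaloisConjPair α β → IsGaloisConjPair (j α) (j β) := by
  rintro α β ⟨hne, hα, hβ, a, b, c, ha, hqα, hqβ⟩
  obtain ⟨A, B, C, hA, hcoef⟩ := exists_int_coeffs a b c ha
  have hα' := hcoef α hqα
  have hβ' := hcoef β hqβ
  obtain ⟨hDpos, hDns⟩ := disc_pos_not_square A B C hA α hα.1 hα'
  obtain ⟨x, y, hpell, hy⟩ := Pell.exists_of_not_isSquare hDpos hDns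
  have hdet : (x - y * B) * (x + y * B) - (-(2 * y * C)) * (2 * y * A) = 1 := by
    linear_combination hpell
  set M := mkGL (x - y * B) (-(2 * y * C)) (2 * y * A) (x + y * B) hdet with hMdef
  have hMval : ((M : Matrix.GeneralLinearGroup (Fin 2) ℤ) : Matrix (Fin 2) (Fin 2) ℤ)
      = !![x - y * B, -(2 * y * C); 2 * y * A, x + y * B] := rfl
  have h2yA : ((2 * y * A : ℤ) : ℝ) ≠ 0 := by
    exact_mod_cast mul_ne_zero (mul_ne_zero two_ne_zero hy) hA
  have hfix : ∀ z : ℝ, Irrational z → (A : ℝ) * z ^ 2 + (B : ℝ) * z + (C : ℝ) = 0 →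
      moebius M z = z := by
    intro z hz hzq
    rw [moebius_mk M _ _ _ _ hMval]
    have hden : ((2 * y * A : ℤ) : ℝ) * z + ((x + y * B : ℤ) : ℝ) ≠ 0 := by
      intro h0
      apply hz
      refine ⟨((-(x + y * B) : ℤ) : ℚ) / ((2 * y * A : ℤ) : ℚ), ?_⟩
      push_cast at h0 ⊢
      rw [div_eq_iff (by push_cast at h2yA; exact h2yA)]
      linarith
    push_cast at hden ⊢
    rw [div_eq_iff hden]

    linear_combination (-2 * (y : ℝ)) * hzq
  have hfα := hfix α hα.1 hα'
  have hfβ := hfix β hβ.1 hβ'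
  have hjαq := hmap α hα
  have hjβq := hmap β hβ
  have hjα : moebius (φ M) (j α) = j α := by rw [← hequiv M α hα, hfα]
  have hjβ : moebius (φ M) (j β) = j β := by rw [← hequiv M β hβ, hfβ]
  have hjne : j α ≠ j β := fun h => hne (by rw [← hinv α hα, ← hinv β hβ, h])
  rcases fixed_point_cases (φ M) (j α) hjαq.1 hjα with ⟨hC, hqa⟩ | ⟨hC0, hB0, hAD⟩
  · rcases fixed_point_cases (φ M) (j β) hjβq.1 hjβ with ⟨_, hqb⟩ | ⟨hC0', _, _⟩
    · refine ⟨hjne, hjαq, hjβq,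
        (((φ M : Matrix.GeneralLinearGroup (Fin 2) ℤ) : Matrix (Fin 2) (Fin 2) ℤ) 1 0 : ℚ),
        (((φ M : Matrix.GeneralLinearGroup (Fin 2) ℤ) : Matrix (Fin 2) (Fin 2) ℤ) 1 1 -
         ((φ M : Matrix.GeneralLinearGroup (Fin 2) ℤ) : Matrix (Fin 2) (Fin 2) ℤ) 0 0 : ℚ),
        ((-(((φ M : Matrix.GeneralLinearGroup (Fin 2) ℤ) : Matrix (Fin 2) (Fin 2) ℤ) 0 1) : ℤ) : ℚ), ?_, ?_, ?_⟩
      · exact_mod_cast hC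
      · push_cast at hqa ⊢; linarith
      · push_cast at hqb ⊢; linarith
    · exact absurd hC0' hC
  · -- the "scalar" case: φ M = ±1, contradiction with M of infinite order
    exfalso
    set N := φ M with hN
    have hu : IsUnit ((N : Matrix (Fin 2) (Fin 2) ℤ)).det :=
      ⟨Matrix.GeneralLinearGroup.det N, rfl⟩
    have hdetN : ((N : Matrix (Fin 2) (Fin 2) ℤ)).det =
        (N : Matrix (Fin 2) (Fin 2) ℤ) 0 0 * (N : Matrix (Fin 2) (Fin 2) ℤ) 0 0 := by
      rw [Matrix.det_fin_two, hB0, hC0, ← hAD]; ring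
    have hE : (N : Matrix (Fin 2) (Fin 2) ℤ) 0 0 * (N : Matrix (Fin 2) (Fin 2) ℤ) 0 0 = 1 := by
      rcases Int.isUnit_iff.mp hu with h | h
      · rw [hdetN] at h; exact h
      · rw [hdetN] at h; nlinarith [sq_nonneg ((N : Matrix (Fin 2) (Fin 2) ℤ) 0 0)]
    have hsq : N * N = 1 := by
      refine Units.ext ?_
      rw [Units.val_mul, Units.val_one]
      ext i j
      fin_cases i <;> fin_cases j <;>
        simp [Matrix.mul_apply, Fin.sum_univ_two, Matrix.one_apply, hB0, hC0, ← hAD, hE]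
    have hMM : M * M = 1 := by
      apply φ.injective
      rw [map_mul, map_one, ← hN, hsq]
    have hmat : ((M : Matrix.GeneralLinearGroup (Fin 2) ℤ) : Matrix (Fin 2) (Fin 2) ℤ) *
        ((M : Matrix.GeneralLinearGroup (Fin 2) ℤ) : Matrix (Fin 2) (Fin 2) ℤ) = 1 := by
      have h2 := congrArg
        (fun g : Matrix.GeneralLinearGroup (Fin 2) ℤ => (g : Matrix (Fin 2) (Fin 2) ℤ)) hMM
      simpa using h2
    have hentry := congrFun (congrFun hmat 1) 0
    rw [hMval] at hentry
    simp [Matrix.mul_apply, Fin.sum_univ_two, Matrix.one_apply] at hentry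
    -- hentry : (2yA)(x - yB) + (x + yB)(2yA) = 0, i.e. 4xyA = 0
    have hy1 : 1 ≤ y * y := by rcases hy.lt_or_gt with h | h <;> nlinarith
    have hx0 : x ≠ 0 := by
      intro h
      rw [h] at hpell
      nlinarith
    have h4' : (4 : ℤ) * (x * (y * A)) = 0 := by linear_combination hentry
    have h4 : x * (y * A) = 0 := by linarith
    exact mul_ne_zero hx0 (mul_ne_zero hy hA) h4
end

section
/- Define the map T_j on the irrationals of (0,1) by: if x = [0; 1,1,...,1 (k times), n_{k+1}, n_{k+2}, ...] with n_{k+1} > 1 and k ≥ 0, then T_j(x) = [0; n_{k+1} - 1, n_{k+2}, ...]. Then the measure with density 1/(x(x+1)) on (0,1) is invariant under T_j (it is an infinite invariant measure, sigma-finite but the map preserves it). -/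
open MeasureTheory

/-- Evaluation of a finite continued-fraction head on a tail value:
`cfEval [n₁,…,n_k] t = 1/(n₁ + 1/(n₂ + ⋯ + 1/(n_k + t)))`. -/
noncomputable def cfEval : List ℕ → ℝ → ℝ
  | [], t => t
  | n :: l, t => 1 / ((n : ℝ) + cfEval l t)

open Set Filter Topology


lemma cfEval_nil (t : ℝ) : cfEval [] t = t := rfl
lemma cfEval_cons (n : ℕ) (l : List ℕ) (t : ℝ) : cfEval (n :: l) t = 1 / ((n : ℝ) + cfEval l t) := rfl

lemma cfEval_rep_succ (k : ℕ) (t : ℝ) :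
    cfEval (List.replicate (k+1) 1) t = 1 / (1 + cfEval (List.replicate k 1) t) := by
  rw [List.replicate_succ, cfEval_cons, Nat.cast_one]

lemma cfEval_rep_mem {u : ℝ} (hu : u ∈ Ioo (0:ℝ) 1) (k : ℕ) :
    cfEval (List.replicate k 1) u ∈ Ioo (0:ℝ) 1 := by
  induction k with
  | zero => simpa [cfEval] using hu
  | succ k ih =>
    rw [cfEval_rep_succ]
    obtain ⟨h0, h1⟩ := ih
    constructor
    · positivity
    · rw [div_lt_one (by linarith)]; linarith

lemma cfEval_rep_succ_gt_half {u : ℝ} (hu : u ∈ Ioo (0:ℝ) 1) (k : ℕ) :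
    1/2 < cfEval (List.replicate (k+1) 1) u := by
  rw [cfEval_rep_succ]
  obtain ⟨h0, h1⟩ := cfEval_rep_mem hu k
  rw [lt_div_iff₀ (by linarith)]; linarith

lemma cf_unique : ∀ j k : ℕ, ∀ u u' : ℝ, u ∈ Ioo (0:ℝ) 1 → u' ∈ Ioo (0:ℝ) 1 →
    u < 1/2 → u' < 1/2 →
    cfEval (List.replicate j 1) u = cfEval (List.replicate k 1) u' → j = k := by
  intro j
  induction j with
  | zero =>
    intro k u u' hu hu' hu2 hu2' h
    cases k with
    | zero => rfl
    | succ k =>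
      exfalso
      have := cfEval_rep_succ_gt_half hu' k
      rw [List.replicate_succ] at this
      simp only [List.replicate, cfEval_nil] at h
      rw [← h] at this
      linarith
  | succ j ih =>
    intro k u u' hu hu' hu2 hu2' h
    cases k with
    | zero =>
      exfalso
      have := cfEval_rep_succ_gt_half hu j
      rw [List.replicate_succ] at this
      simp only [List.replicate, cfEval_nil] at h
      rw [h] at this
      linarith
    | succ k =>
      rw [cfEval_rep_succ, cfEval_rep_succ] at h
      obtain ⟨a0, a1⟩ := cfEval_rep_mem hu j
      obtain ⟨b0, b1⟩ := cfEval_rep_mem hu' k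
      have : cfEval (List.replicate j 1) u = cfEval (List.replicate k 1) u' := by
        field_simp at h
        linarith
      rw [ih k u u' hu hu' hu2 hu2' this]


lemma cassiniZ : ∀ k : ℕ, (Nat.fib (k+1) : ℤ) * Nat.fib (k+1) - Nat.fib k * Nat.fib (k+2) = (-1)^k
  | 0 => by norm_num
  | (k+1) => by
    have ih := cassiniZ k
    have e1 : Nat.fib (k+2) = Nat.fib k + Nat.fib (k+1) := Nat.fib_add_two
    have e2 : Nat.fib (k+3) = Nat.fib (k+1) + Nat.fib (k+2) := Nat.fib_add_two
    have h1 : (Nat.fib (k+2) : ℤ) = Nat.fib k + Nat.fib (k+1) := by exact_mod_cast e1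
    have h2 : (Nat.fib (k+3) : ℤ) = Nat.fib (k+1) + Nat.fib (k+2) := by exact_mod_cast e2
    rw [h1] at ih ⊢
    rw [h2, h1]
    linear_combination (-1 : ℤ) * ih

lemma cassiniR (k : ℕ) :
    (Nat.fib (k+1) : ℝ) * Nat.fib (k+1) - Nat.fib k * Nat.fib (k+2) = (-1)^k := by
  exact_mod_cast congrArg (fun z : ℤ => (z : ℝ)) (cassiniZ k)

lemma fibR_pos (k : ℕ) : (0:ℝ) < Nat.fib (k+1) := by
  exact_mod_cast Nat.fib_pos.mpr (Nat.succ_pos k)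

lemma fibR_addtwo (k : ℕ) : (Nat.fib (k+2) : ℝ) = Nat.fib k + Nat.fib (k+1) := by
  have e : Nat.fib (k+2) = Nat.fib k + Nat.fib (k+1) := Nat.fib_add_two
  exact_mod_cast e

lemma le_fib_add_two (k : ℕ) : k ≤ Nat.fib (k+2) := by
  induction k with
  | zero => simp
  | succ k ih =>
    have h1 : 1 ≤ Nat.fib (k+1) := Nat.fib_pos.mpr (by omega)
    have h2 : Nat.fib (k+3) = Nat.fib (k+1) + Nat.fib (k+2) := Nat.fib_add_two
    show k + 1 ≤ Nat.fib (k+3)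
    omega

lemma fib_tendsto : Tendsto (fun k => (Nat.fib k : ℝ)) atTop atTop := by
  apply tendsto_natCast_atTop_atTop.comp
  apply tendsto_atTop_atTop.mpr
  intro b
  exact ⟨b + 2, fun a ha => le_trans (le_fib_add_two b) (Nat.fib_mono ha)⟩

noncomputable def gk (k : ℕ) (y : ℝ) : ℝ :=
  ((Nat.fib (k+1) : ℝ) * y + Nat.fib k) / ((Nat.fib (k+2) : ℝ) * y + Nat.fib (k+1))

lemma gk_den_pos (k : ℕ) {y : ℝ} (hy : 0 < y) : 0 < (Nat.fib (k+2) : ℝ) * y + Nat.fib (k+1) := by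
  have := fibR_pos k
  have := fibR_pos (k+1)
  positivity

lemma gk_num_pos (k : ℕ) {y : ℝ} (hy : 0 < y) : 0 < (Nat.fib (k+1) : ℝ) * y + Nat.fib k := by
  have h1 := fibR_pos k
  have h2 : (0:ℝ) ≤ Nat.fib k := Nat.cast_nonneg _
  nlinarith

lemma gk_mem (k : ℕ) {y : ℝ} (hy : y ∈ Ioo (0:ℝ) 1) : gk k y ∈ Ioo (0:ℝ) 1 := by
  obtain ⟨hy0, hy1⟩ := hy
  have hden := gk_den_pos k hy0
  have hnum := gk_num_pos k hy0
  constructor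
  · exact div_pos hnum hden
  · rw [gk, div_lt_one hden]
    rw [fibR_addtwo k]
    rcases Nat.eq_zero_or_pos k with hk | hk
    · subst hk; norm_num
    · have h1 : (1:ℝ) ≤ Nat.fib k := by exact_mod_cast Nat.fib_pos.mpr hk
      have h2 : (Nat.fib k : ℝ) ≤ Nat.fib (k+1) := by exact_mod_cast Nat.fib_mono (Nat.le_succ k)
      nlinarith

lemma cfEval_rep_gk (k : ℕ) {y : ℝ} (hy : y ∈ Ioo (0:ℝ) 1) :
    cfEval (List.replicate k 1) (y/(y+1)) = gk k y := by
  obtain ⟨hy0, hy1⟩ := hy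
  induction k with
  | zero => simp [cfEval, gk]
  | succ k ih =>
    rw [cfEval_rep_succ, ih]
    have hden := gk_den_pos k hy0
    have hnum := gk_num_pos k hy0
    have h3 : (Nat.fib (k+3) : ℝ) = Nat.fib (k+1) + Nat.fib (k+2) := by
      have e : Nat.fib (k+3) = Nat.fib (k+1) + Nat.fib (k+2) := Nat.fib_add_two
      exact_mod_cast e
    show 1 / (1 + gk k y) =
        ((Nat.fib (k+2):ℝ) * y + Nat.fib (k+1)) / ((Nat.fib (k+3):ℝ) * y + Nat.fib (k+2))
    have hden2 : (0:ℝ) < (Nat.fib (k+3):ℝ) * y + Nat.fib (k+2) := by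
      rw [h3]; nlinarith [fibR_pos k, fibR_pos (k+1)]
    rw [gk, one_add_div (ne_of_gt hden), one_div_div, h3, fibR_addtwo k]
    congr 1 <;> ring
noncomputable def tgold : ℝ := (Real.sqrt 5 - 1)/2

lemma tgold_sq : tgold * tgold + tgold = 1 := by
  have h5 : Real.sqrt 5 * Real.sqrt 5 = 5 := Real.mul_self_sqrt (by norm_num)
  rw [tgold]; nlinarith

lemma tgold_mem : tgold ∈ Ioo (1/2 : ℝ) 1 := by
  have h5 : Real.sqrt 5 * Real.sqrt 5 = 5 := Real.mul_self_sqrt (by norm_num)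
  have h0 : 0 ≤ Real.sqrt 5 := Real.sqrt_nonneg 5
  constructor <;> (rw [tgold]; nlinarith)

lemma tgold_fixed (k : ℕ) : cfEval (List.replicate k 1) tgold = tgold := by
  induction k with
  | zero => rfl
  | succ k ih =>
    rw [cfEval_rep_succ, ih]
    have h1 : tgold > 0 := lt_trans (by norm_num) tgold_mem.1
    rw [eq_comm, eq_div_iff (by nlinarith)]
    nlinarith [tgold_sq]

/-- formula for the all-ones continued fraction head -/
lemma cfEval_rep_formula : ∀ (k : ℕ) (u : ℝ), 0 < u →
    cfEval (List.replicate (k+1) 1) u =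
      ((Nat.fib (k+1) : ℝ) + Nat.fib k * u) / ((Nat.fib (k+2) : ℝ) + Nat.fib (k+1) * u) := by
  intro k
  induction k with
  | zero => intro u hu; rw [cfEval_rep_succ]; simp [cfEval]
  | succ k ih =>
    intro u hu
    have hden : (0:ℝ) < (Nat.fib (k+2) : ℝ) + Nat.fib (k+1) * u := by
      nlinarith [fibR_pos (k+1), Nat.cast_nonneg (α := ℝ) (Nat.fib (k+1))]
    have hnum : (0:ℝ) ≤ (Nat.fib (k+1) : ℝ) + Nat.fib k * u := by
      nlinarith [fibR_pos k, Nat.cast_nonneg (α := ℝ) (Nat.fib k)]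
    rw [cfEval_rep_succ, ih u hu]
    have h3 : (Nat.fib (k+3) : ℝ) = Nat.fib (k+1) + Nat.fib (k+2) := by
      have e : Nat.fib (k+3) = Nat.fib (k+1) + Nat.fib (k+2) := Nat.fib_add_two
      exact_mod_cast e
    show _ = ((Nat.fib (k+2) : ℝ) + Nat.fib (k+1) * u) / ((Nat.fib (k+3) : ℝ) + Nat.fib (k+2) * u)
    rw [one_add_div (ne_of_gt hden), one_div_div, h3, fibR_addtwo k]
    congr 1 <;> ring

/-- contraction estimate -/
lemma cf_contract (k : ℕ) {u v : ℝ} (hu : u ∈ Ioo (0:ℝ) 1) (hv : v ∈ Ioo (0:ℝ) 1) :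
    |cfEval (List.replicate (k+1) 1) u - cfEval (List.replicate (k+1) 1) v|
      ≤ 1 / (Nat.fib (k+2) : ℝ)^2 := by
  obtain ⟨hu0, hu1⟩ := hu
  obtain ⟨hv0, hv1⟩ := hv
  rw [cfEval_rep_formula k u hu0, cfEval_rep_formula k v hv0]
  have hF2 := fibR_pos (k+1)
  have hF1 := fibR_pos k
  have hF0 : (0:ℝ) ≤ Nat.fib k := Nat.cast_nonneg _
  have hdu : (0:ℝ) < (Nat.fib (k+2) : ℝ) + Nat.fib (k+1) * u := by nlinarith
  have hdv : (0:ℝ) < (Nat.fib (k+2) : ℝ) + Nat.fib (k+1) * v := by nlinarith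
  rw [div_sub_div _ _ (ne_of_gt hdu) (ne_of_gt hdv), abs_div]
  have hnum : ((Nat.fib (k+1) : ℝ) + Nat.fib k * u) * ((Nat.fib (k+2) : ℝ) + Nat.fib (k+1) * v)
      - ((Nat.fib (k+2) : ℝ) + Nat.fib (k+1) * u) * ((Nat.fib (k+1) : ℝ) + Nat.fib k * v)
      = ((Nat.fib k : ℝ) * Nat.fib (k+2) - Nat.fib (k+1) * Nat.fib (k+1)) * (u - v) := by ring
  rw [hnum]
  have hcas : |(Nat.fib k : ℝ) * Nat.fib (k+2) - Nat.fib (k+1) * Nat.fib (k+1)| = 1 := by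
    have := cassiniR k
    rcases Nat.even_or_odd k with he | ho
    · rw [he.neg_one_pow] at this
      rw [abs_eq (by norm_num)]; right; linarith
    · rw [ho.neg_one_pow] at this
      rw [abs_eq (by norm_num)]; left; linarith
  rw [abs_mul, hcas, one_mul, abs_of_pos (mul_pos hdu hdv)]
  rw [div_le_div_iff₀ (mul_pos hdu hdv) (by positivity)]
  have habs : |u - v| ≤ 1 := by rw [abs_le]; constructor <;> linarith
  have hF3 : (0:ℝ) < (Nat.fib (k+2):ℝ) := by exact_mod_cast Nat.fib_pos.mpr (by omega)
  have hd2 : (Nat.fib (k+2) : ℝ)^2 ≤ ((Nat.fib (k+2) : ℝ) + Nat.fib (k+1) * u) * ((Nat.fib (k+2) : ℝ) + Nat.fib (k+1) * v) := by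
    nlinarith [hF3, mul_pos hF1 hu0, mul_pos hF1 hv0, mul_pos (mul_pos hF1 hu0) (mul_pos hF1 hv0)]
  have hmm := mul_le_mul_of_nonneg_right habs (le_of_lt (by positivity : (0:ℝ) < (Nat.fib (k+2):ℝ)^2))
  nlinarith [hmm, hd2]
noncomputable def gstep (z : ℝ) : ℝ := 1/z - 1

lemma gstep_mem {x : ℝ} (hx : x ∈ Ioo (1/2 : ℝ) 1) : gstep x ∈ Ioo (0:ℝ) 1 := by
  obtain ⟨h0, h1⟩ := hx
  have hx0 : 0 < x := by linarith
  constructor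
  · rw [gstep, sub_pos, lt_div_iff₀ hx0]; linarith
  · rw [gstep, sub_lt_iff_lt_add, div_lt_iff₀ hx0]; linarith

lemma gstep_irrational {x : ℝ} (hx0 : x ≠ 0) (h : Irrational x) : Irrational (gstep x) := by
  rw [gstep, one_div]
  simpa using h.inv.sub_natCast 1

lemma gstep_eq {x : ℝ} (hx0 : x ≠ 0) : x = 1 / (1 + gstep x) := by
  rw [gstep]
  have : 1 + (1/x - 1) = 1/x := by ring
  rw [this, one_div_one_div]

lemma iter_spec : ∀ (j : ℕ) (x : ℝ), x ∈ Ioo (0:ℝ) 1 → Irrational x →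
    (∀ i < j, gstep^[i] x ∈ Ioo (1/2 : ℝ) 1) →
    gstep^[j] x ∈ Ioo (0:ℝ) 1 ∧ Irrational (gstep^[j] x) ∧
      x = cfEval (List.replicate j 1) (gstep^[j] x) := by
  intro j
  induction j with
  | zero => intro x hx hirr _; exact ⟨hx, hirr, rfl⟩
  | succ j ih =>
    intro x hx hirr hi
    have h0 : x ∈ Ioo (1/2 : ℝ) 1 := by simpa using hi 0 (Nat.succ_pos j)
    have hx0 : x ≠ 0 := ne_of_gt hx.1
    have hs : gstep x ∈ Ioo (0:ℝ) 1 := gstep_mem h0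
    have hsirr : Irrational (gstep x) := gstep_irrational hx0 hirr
    have hi' : ∀ i < j, gstep^[i] (gstep x) ∈ Ioo (1/2 : ℝ) 1 := by
      intro i hij
      rw [← Function.iterate_succ_apply]
      exact hi (i+1) (by omega)
    obtain ⟨h1, h2, h3⟩ := ih (gstep x) hs hsirr hi'
    rw [Function.iterate_succ_apply]
    refine ⟨h1, h2, ?_⟩
    rw [cfEval_rep_succ, ← h3]
    exact gstep_eq hx0

lemma eq_tgold {x : ℝ} (hx : x ∈ Ioo (0:ℝ) 1) (hirr : Irrational x)
    (h : ∀ k, gstep^[k] x ∈ Ioo (1/2 : ℝ) 1) : x = tgold := by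
  have key : ∀ k : ℕ, |x - tgold| ≤ 1 / (Nat.fib (k+2) : ℝ)^2 := by
    intro k
    have hspec := iter_spec (k+1) x hx hirr (fun i _ => h i)
    have hz : gstep^[k+1] x ∈ Ioo (0:ℝ) 1 := by
      have := h (k+1)
      exact ⟨by linarith [this.1], this.2⟩
    have hgoldIoo : tgold ∈ Ioo (0:ℝ) 1 := ⟨by linarith [tgold_mem.1], tgold_mem.2⟩
    have := cf_contract k hz hgoldIoo
    rw [← hspec.2.2, tgold_fixed (k+1)] at this
    exact this
  have h0 : Tendsto (fun k : ℕ => 1 / (Nat.fib (k+2) : ℝ)^2) atTop (nhds 0) := by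
    have h1 : Tendsto (fun k : ℕ => (Nat.fib (k+2) : ℝ)) atTop atTop :=
      fib_tendsto.comp (tendsto_add_atTop_nat 2)
    have h2 : Tendsto (fun k : ℕ => ((Nat.fib (k+2) : ℝ))^2) atTop atTop := by
      simpa [pow_two] using h1.atTop_mul_atTop₀ h1
    simp only [one_div]; exact h2.inv_tendsto_atTop
  have : |x - tgold| ≤ 0 := ge_of_tendsto h0 (Filter.Eventually.of_forall key)
  have := abs_nonneg (x - tgold)
  have : |x - tgold| = 0 := le_antisymm ‹_› ‹_›
  linarith [abs_eq_zero.mp this, sub_eq_zero.mp (abs_eq_zero.mp this)]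

lemma exists_expansion {x : ℝ} (hx : x ∈ Ioo (0:ℝ) 1) (hirr : Irrational x) (hxg : x ≠ tgold) :
    ∃ (k n : ℕ) (t : ℝ), 2 ≤ n ∧ t ∈ Ioo (0:ℝ) 1 ∧ Irrational t ∧
      x = cfEval (List.replicate k 1) (1/((n:ℝ) + t)) := by
  classical
  by_cases hall : ∀ k, gstep^[k] x ∈ Ioo (1/2 : ℝ) 1
  · exact absurd (eq_tgold hx hirr hall) hxg
  · push_neg at hall
    have hk := Nat.find_spec hall
    set k := Nat.find hall with hkdef
    have hmin : ∀ i < k, gstep^[i] x ∈ Ioo (1/2 : ℝ) 1 := fun i hik =>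
      not_not.mp (Nat.find_min hall hik)
    obtain ⟨hz, hzirr, hxeq⟩ := iter_spec k x hx hirr hmin
    set z := gstep^[k] x with hzdef
    have hne : z ≠ 1/2 := by
      intro hc
      exact hzirr.ne_rat (1/2) (by rw [hc]; norm_num)
    have hz2 : z < 1/2 := by
      by_contra hlt
      push_neg at hlt
      rcases lt_or_eq_of_le hlt with h' | h'
      · exact hk ⟨h', hz.2⟩
      · exact hne h'.symm
    have hz0 : 0 < z := hz.1
    have hs2 : 2 < 1/z := by
      rw [lt_div_iff₀ hz0]; linarith
    have hsirr : Irrational (1/z) := by rw [one_div]; exact hzirr.inv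
    set s := 1/z with hsdef
    set n := ⌊s⌋₊ with hndef
    have hn2 : 2 ≤ n := Nat.le_floor (by exact_mod_cast hs2.le)
    have hfl : (n : ℝ) ≤ s := Nat.floor_le (by linarith)
    have hfl2 : s < n + 1 := Nat.lt_floor_add_one s
    set t := s - n with htdef
    have ht1 : t < 1 := by rw [htdef]; linarith
    have htirr : Irrational t := hsirr.sub_natCast n
    have ht0 : 0 < t := by
      have hne : t ≠ 0 := htirr.ne_zero
      have : 0 ≤ t := by rw [htdef]; linarith
      exact lt_of_le_of_ne this (Ne.symm hne)
    refine ⟨k, n, t, hn2, ⟨ht0, ht1⟩, htirr, ?_⟩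
    have : (n:ℝ) + t = s := by rw [htdef]; ring
    rw [this, hsdef, one_div_one_div]
    exact hxeq
lemma gk_irrational (k : ℕ) {y : ℝ} (hy : y ∈ Ioo (0:ℝ) 1) (hyirr : Irrational y) :
    Irrational (gk k y) := by
  by_contra hrat
  rw [Irrational, not_not] at hrat
  obtain ⟨q, hq⟩ := hrat
  have hden := gk_den_pos k hy.1
  rw [gk] at hq
  rw [eq_comm, div_eq_iff (ne_of_gt hden)] at hq
  -- hq : fib(k+1)*y + fib k = q * (fib(k+2)*y + fib(k+1))
  have heq : y * ((q:ℝ) * Nat.fib (k+2) - Nat.fib (k+1)) = (Nat.fib k : ℝ) - q * Nat.fib (k+1) := by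
    linear_combination -hq
  by_cases hc : (q:ℝ) * Nat.fib (k+2) - Nat.fib (k+1) = 0
  · have e1 : (q:ℝ) * Nat.fib (k+2) = Nat.fib (k+1) := by linarith
    have e2 : (q:ℝ) * Nat.fib (k+1) = Nat.fib k := by
      rw [hc, mul_zero] at heq; linarith
    have hzero : (Nat.fib (k+1):ℝ) * Nat.fib (k+1) - Nat.fib k * Nat.fib (k+2) = 0 := by
      linear_combination (Nat.fib (k+2):ℝ) * e2 - (Nat.fib (k+1):ℝ) * e1
    rw [cassiniR k] at hzero
    exact pow_ne_zero k (by norm_num : (-1:ℝ) ≠ 0) hzero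
  · apply hyirr
    have hcq : (q * Nat.fib (k+2) - Nat.fib (k+1) : ℚ) ≠ 0 := by
      intro h
      apply hc
      have : ((q * Nat.fib (k+2) - Nat.fib (k+1) : ℚ) : ℝ) = 0 := by rw [h]; norm_num
      push_cast at this
      linarith
    refine ⟨(Nat.fib k - q * Nat.fib (k+1)) / (q * Nat.fib (k+2) - Nat.fib (k+1)), ?_⟩
    have hcR : ((q * Nat.fib (k+2) - Nat.fib (k+1) : ℚ) : ℝ) ≠ 0 := by
      exact_mod_cast hcq
    push_cast at hcR ⊢
    rw [div_eq_iff hcR]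
    linarith [heq]

lemma gk_in_preimage (T : ℝ → ℝ)
    (hT : ∀ x ∈ Set.Ioo (0 : ℝ) 1, Irrational x → ∀ (k : ℕ) (n : ℕ), 2 ≤ n →
      ∀ t ∈ Set.Ioo (0 : ℝ) 1, x = cfEval (List.replicate k 1) (1 / ((n : ℝ) + t)) →
        T x = 1 / (((n : ℝ) - 1) + t))
    (k : ℕ) {y : ℝ} (hy : y ∈ Ioo (0:ℝ) 1) (hyirr : Irrational y) :
    T (gk k y) = y := by
  obtain ⟨hy0, hy1⟩ := hy
  have hs1 : 1 < 1/y := by rw [lt_div_iff₀ hy0]; linarith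
  set s := 1/y with hsdef
  set m := ⌊s⌋₊ with hmdef
  have hm1 : 1 ≤ m := Nat.le_floor (by exact_mod_cast hs1.le)
  have hfl : (m:ℝ) ≤ s := Nat.floor_le (by linarith)
  have hfl2 : s < m + 1 := Nat.lt_floor_add_one s
  have hsirr : Irrational s := by rw [hsdef, one_div]; exact hyirr.inv
  set t := s - m with htdef
  have htirr : Irrational t := hsirr.sub_natCast m
  have ht0 : 0 < t := lt_of_le_of_ne (by rw [htdef]; linarith) (Ne.symm htirr.ne_zero)
  have ht1 : t < 1 := by rw [htdef]; linarith
  have hkey : 1/((((m+1:ℕ)):ℝ) + t) = y/(y+1) := by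
    have h1 : (((m+1:ℕ)):ℝ) + t = 1 + s := by push_cast; rw [htdef]; ring
    rw [h1, hsdef, one_add_div (ne_of_gt hy0), one_div_div]
  have hx : gk k y = cfEval (List.replicate k 1) (1/((((m+1:ℕ)):ℝ) + t)) := by
    rw [hkey]
    exact (cfEval_rep_gk k ⟨hy0, hy1⟩).symm
  have hTx := hT (gk k y) (gk_mem k ⟨hy0, hy1⟩) (gk_irrational k ⟨hy0, hy1⟩ hyirr)
    k (m+1) (by omega) t ⟨ht0, ht1⟩ hx
  rw [hTx]
  have h2 : ((((m+1:ℕ)):ℝ) - 1) + t = s := by push_cast; rw [htdef]; ring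
  rw [h2, hsdef, one_div_one_div]

noncomputable def ak (k : ℕ) (y : ℝ) : ℝ := (Nat.fib (k+1) : ℝ) * y + Nat.fib k

lemma ak_pos (k : ℕ) {y : ℝ} (hy : 0 < y) : 0 < ak k y := gk_num_pos k hy

lemma ak_rec (k : ℕ) (y : ℝ) : ak (k+2) y = ak k y + ak (k+1) y := by
  show (Nat.fib (k+3) : ℝ) * y + Nat.fib (k+2) =
      ((Nat.fib (k+1) : ℝ) * y + Nat.fib k) + ((Nat.fib (k+2) : ℝ) * y + Nat.fib (k+1))
  have h3 : (Nat.fib (k+3) : ℝ) = Nat.fib (k+1) + Nat.fib (k+2) := by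
    have e : Nat.fib (k+3) = Nat.fib (k+1) + Nat.fib (k+2) := Nat.fib_add_two
    exact_mod_cast e
  rw [h3, fibR_addtwo k]
  ring

lemma ak_ge_one (k : ℕ) {y : ℝ} (hy : 0 < y) : 1 ≤ ak (k+1) y := by
  have h1 : (1:ℝ) ≤ Nat.fib (k+1) := by exact_mod_cast Nat.fib_pos.mpr (Nat.succ_pos k)
  have h2 : (0:ℝ) ≤ (Nat.fib (k+2):ℝ) * y := by positivity
  rw [ak]
  show 1 ≤ (Nat.fib (k+2):ℝ) * y + (Nat.fib (k+1):ℝ)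
  linarith

lemma ak_ge_fib (k : ℕ) {y : ℝ} (hy : 0 < y) : (Nat.fib k : ℝ) ≤ ak k y := by
  have h2 : (0:ℝ) ≤ (Nat.fib (k+1):ℝ) * y := by positivity
  rw [ak]; linarith

lemma gk_eq_ak (k : ℕ) (y : ℝ) : gk k y = ak k y / ak (k+1) y := rfl

lemma tsum_term {y : ℝ} (hy : y ∈ Ioo (0:ℝ) 1) :
    ∑' k : ℕ, ENNReal.ofReal (1/(ak k y * ak (k+2) y)) = ENNReal.ofReal (1/(y*(y+1))) := by
  obtain ⟨hy0, hy1⟩ := hy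
  set b : ℕ → ℝ := fun k => 1/(ak k y * ak (k+1) y) with hbdef
  have hterm : ∀ k, 1/(ak k y * ak (k+2) y) = b k - b (k+1) := by
    intro k
    have p0 := ak_pos k hy0
    have p1 := ak_pos (k+1) hy0
    have p2 := ak_pos (k+2) hy0
    rw [hbdef]
    simp only []
    rw [ak_rec k y] at p2 ⊢
    field_simp
    ring
  have hb0 : b 0 = 1/(y*(y+1)) := by
    rw [hbdef]
    simp only []
    rw [ak, ak]
    norm_num [Nat.fib_one, Nat.fib_two]
  have hbtend : Tendsto b atTop (nhds 0) := by
    have h1 : Tendsto (fun k => ak k y * ak (k+1) y) atTop atTop := by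
      apply tendsto_atTop_mono (fun k => ?_) (fib_tendsto)
      have h2 := ak_ge_fib k hy0
      have h3 := ak_ge_one k hy0
      have h4 : (0:ℝ) ≤ Nat.fib k := Nat.cast_nonneg _
      nlinarith
    have h2 := h1.inv_tendsto_atTop
    have hbe : b = (fun k => ak k y * ak (k+1) y)⁻¹ := by
      funext k; simp [hbdef, Pi.inv_apply, one_div]
    rw [hbe]; exact h2
  have hnonneg : ∀ i : ℕ, 0 ≤ 1/(ak i y * ak (i+2) y) := fun i =>
    le_of_lt (div_pos one_pos (mul_pos (ak_pos i hy0) (ak_pos (i+2) hy0)))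
  have hsum : HasSum (fun k => 1/(ak k y * ak (k+2) y)) (1/(y*(y+1))) := by
    rw [hasSum_iff_tendsto_nat_of_nonneg hnonneg]
    have hps : ∀ n, ∑ i ∈ Finset.range n, (1/(ak i y * ak (i+2) y)) = b 0 - b n := by
      intro n
      rw [Finset.sum_congr rfl (fun i _ => hterm i)]
      exact Finset.sum_range_sub' b n
    simp only [hps]
    rw [← hb0]
    simpa using tendsto_const_nhds.sub hbtend
  rw [← ENNReal.ofReal_tsum_of_nonneg hnonneg hsum.summable, hsum.tsum_eq]

lemma lintegral_image_1d {s : Set ℝ} {f f' : ℝ → ℝ} (hs : MeasurableSet s)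
    (hf' : ∀ x ∈ s, HasDerivWithinAt f (f' x) s x) (hf : Set.InjOn f s) (g : ℝ → ENNReal) :
    ∫⁻ x in f '' s, g x = ∫⁻ x in s, ENNReal.ofReal |f' x| * g (f x) := by
  simpa only [ContinuousLinearMap.det_toSpanSingleton] using
    MeasureTheory.lintegral_image_eq_lintegral_abs_det_fderiv_mul volume hs
      (fun x hx => (hf' x hx).hasFDerivWithinAt) hf g

/-- The infinite measure on `(0,1)` with density `1/(x(x+1))` is invariant under
the map `T_j` which sends `[0; 1,…,1 (k times), n_{k+1}, n_{k+2}, …]` (with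
`n_{k+1} > 1`) to `[0; n_{k+1} - 1, n_{k+2}, …]`. -/
theorem Tjimm_preserves_infinite_measure (T : ℝ → ℝ) (hTmeas : Measurable T)
    (hTmaps : ∀ x ∈ Set.Ioo (0 : ℝ) 1, Irrational x → T x ∈ Set.Ioo (0 : ℝ) 1)
    -- `T` acts on continued fractions by deleting the initial run of `1`'s
    -- and decrementing the first partial quotient exceeding `1`:
    (hT : ∀ x ∈ Set.Ioo (0 : ℝ) 1, Irrational x → ∀ (k : ℕ) (n : ℕ), 2 ≤ n →
      ∀ t ∈ Set.Ioo (0 : ℝ) 1, x = cfEval (List.replicate k 1) (1 / ((n : ℝ) + t)) →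
        T x = 1 / (((n : ℝ) - 1) + t)) :
    ∀ A : Set ℝ, MeasurableSet A → A ⊆ Set.Ioo (0 : ℝ) 1 →
      (volume.withDensity fun x : ℝ => ENNReal.ofReal (1 / (x * (x + 1))))
          (T ⁻¹' A ∩ Set.Ioo (0 : ℝ) 1) =
        (volume.withDensity fun x : ℝ => ENNReal.ofReal (1 / (x * (x + 1)))) A := by
  intro A hA hAsub
  set d : ℝ → ENNReal := fun x => ENNReal.ofReal (1 / (x * (x + 1))) with hddef
  set μ := volume.withDensity d with hμdef
  show μ (T ⁻¹' A ∩ Set.Ioo 0 1) = μ A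
  have hirrmeas : MeasurableSet {x : ℝ | Irrational x} := by
    have he : {x : ℝ | Irrational x} = (Set.range ((↑) : ℚ → ℝ))ᶜ := rfl
    rw [he]
    exact (Set.countable_range _).measurableSet.compl
  set A' := A ∩ {x : ℝ | Irrational x} with hA'def
  have hA'meas : MeasurableSet A' := hA.inter hirrmeas
  have hA'sub : A' ⊆ Ioo (0:ℝ) 1 := fun x hx => hAsub hx.1
  have hnull : ∀ s : Set ℝ, s.Countable → μ s = 0 := fun s hs =>
    (withDensity_absolutelyContinuous volume d) (hs.measure_zero volume)
  -- μ A = μ A'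
  have hAA' : μ A = μ A' := by
    apply le_antisymm
    · calc μ A ≤ μ (A' ∪ Set.range ((↑) : ℚ → ℝ)) := by
            apply measure_mono
            intro x hx
            by_cases h : Irrational x
            · exact Or.inl ⟨hx, h⟩
            · exact Or.inr (not_not.mp h)
        _ ≤ μ A' + μ (Set.range ((↑) : ℚ → ℝ)) := measure_union_le _ _
        _ = μ A' := by rw [hnull _ (Set.countable_range _), add_zero]
    · exact measure_mono Set.inter_subset_left
  -- basic facts about gk
  have hinj : ∀ k, Set.InjOn (gk k) A' := by
    intro k y hy y' hy' he
    have hy0 := (hA'sub hy).1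
    have hy0' := (hA'sub hy').1
    have hd := gk_den_pos k hy0
    have hd' := gk_den_pos k hy0'
    rw [gk, gk, div_eq_div_iff (ne_of_gt hd) (ne_of_gt hd')] at he
    have hfactor : ((Nat.fib (k+1):ℝ) * Nat.fib (k+1) - Nat.fib k * Nat.fib (k+2)) * (y - y') = 0 := by
      linear_combination he
    rw [cassiniR k] at hfactor
    have hne : ((-1:ℝ))^k ≠ 0 := pow_ne_zero _ (by norm_num)
    rcases mul_eq_zero.mp hfactor with h | h
    · exact absurd h hne
    · linarith [sub_eq_zero.mp h]
  have hcont : ∀ k, ContinuousOn (gk k) A' := by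
    intro k
    show ContinuousOn (fun y : ℝ =>
      ((Nat.fib (k+1) : ℝ) * y + Nat.fib k) / ((Nat.fib (k+2) : ℝ) * y + Nat.fib (k+1))) A'
    apply ContinuousOn.div
    · exact ((continuous_const.mul continuous_id).add continuous_const).continuousOn
    · exact ((continuous_const.mul continuous_id).add continuous_const).continuousOn
    · intro y hy
      exact ne_of_gt (gk_den_pos k (hA'sub hy).1)
  have hmeasimg : ∀ k, MeasurableSet (gk k '' A') := fun k =>
    hA'meas.image_of_continuousOn_injOn (hcont k) (hinj k)
  -- mapping into (0,1/2)
  have huprop : ∀ y : ℝ, y ∈ Ioo (0:ℝ) 1 → y/(y+1) ∈ Ioo (0:ℝ) 1 ∧ y/(y+1) < 1/2 := by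
    intro y hy
    obtain ⟨h0, h1⟩ := hy
    refine ⟨⟨by positivity, ?_⟩, ?_⟩
    · rw [div_lt_one (by linarith)]; linarith
    · rw [div_lt_iff₀ (by linarith)]; linarith
  -- disjointness
  have hdisj : Pairwise (Function.onFun Disjoint fun k => gk k '' A') := by
    intro j k hjk
    rw [Function.onFun, Set.disjoint_left]
    rintro x ⟨y, hy, rfl⟩ ⟨y', hy', he⟩
    apply hjk
    have hyI := hA'sub hy
    have hyI' := hA'sub hy'
    have h1 : cfEval (List.replicate j 1) (y/(y+1)) = cfEval (List.replicate k 1) (y'/(y'+1)) := by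
      rw [cfEval_rep_gk j hyI, cfEval_rep_gk k hyI']
      exact he.symm
    obtain ⟨hu1, hu2⟩ := huprop y hyI
    obtain ⟨hu1', hu2'⟩ := huprop y' hyI'
    exact cf_unique j k _ _ hu1 hu1' hu2 hu2' h1
  -- set identification
  have hsub1 : (⋃ k, gk k '' A') ⊆ T ⁻¹' A ∩ Ioo 0 1 := by
    intro x hx
    obtain ⟨k, y, hy, rfl⟩ := by simpa using hx
    refine ⟨?_, gk_mem k (hA'sub hy)⟩
    show T (gk k y) ∈ A
    rw [gk_in_preimage T hT k (hA'sub hy) hy.2]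
    exact hy.1
  have hsub2 : T ⁻¹' A ∩ Ioo 0 1 ⊆ (⋃ k, gk k '' A') ∪ (Set.range ((↑) : ℚ → ℝ) ∪ {tgold}) := by
    rintro x ⟨hxA, hxIoo⟩
    by_cases hirr : Irrational x
    · by_cases hgold : x = tgold
      · exact Or.inr (Or.inr (by simp [hgold]))
      · left
        obtain ⟨k, n, t, hn2, ht, htirr, hxeq⟩ := exists_expansion hxIoo hirr hgold
        have hn1 : (1:ℝ) ≤ (n:ℝ) - 1 := by
          have : (2:ℝ) ≤ (n:ℝ) := by exact_mod_cast hn2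
          linarith
        set y := 1/(((n:ℝ)-1) + t) with hydef
        have hTx : T x = y := hT x hxIoo hirr k n hn2 t ht hxeq
        have hyIoo : y ∈ Ioo (0:ℝ) 1 := by
          constructor
          · rw [hydef]
            exact one_div_pos.mpr (by linarith [ht.1])
          · rw [hydef, div_lt_one (by linarith [ht.1])]
            linarith [ht.1]
        have hyirr : Irrational y := by
          rw [hydef, one_div]
          apply Irrational.inv
          have he : ((n:ℝ) - 1) + t = t + ((n-1 : ℕ) : ℝ) := by
            have : ((n-1 : ℕ) : ℝ) = (n:ℝ) - 1 := by
              push_cast [Nat.cast_sub (by omega : 1 ≤ n)]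
              ring
            rw [this]; ring
          rw [he]
          exact htirr.add_natCast (n-1)
        have hyA : y ∈ A := by rw [← hTx]; exact hxA
        apply Set.mem_iUnion.mpr
        refine ⟨k, y, ⟨hyA, hyirr⟩, ?_⟩
        have h1 : y/(y+1) = 1/((n:ℝ)+t) := by
          rw [hydef]
          have hpos : (0:ℝ) < ((n:ℝ)-1) + t := by linarith [ht.1]
          have hne : ((n:ℝ)-1) + t ≠ 0 := ne_of_gt hpos
          have hne2 : (n:ℝ) + t ≠ 0 := by intro hc; rw [show (n:ℝ) + t = (((n:ℝ)-1) + t) + 1 by ring] at hc; linarith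
          field_simp
          ring
        rw [← cfEval_rep_gk k hyIoo, h1, ← hxeq]
    · exact Or.inr (Or.inl (not_not.mp hirr))
  have hE2 : μ (T ⁻¹' A ∩ Ioo 0 1) = μ (⋃ k, gk k '' A') := by
    apply le_antisymm
    · calc μ (T ⁻¹' A ∩ Ioo 0 1)
          ≤ μ ((⋃ k, gk k '' A') ∪ (Set.range ((↑) : ℚ → ℝ) ∪ {tgold})) := measure_mono hsub2
        _ ≤ μ (⋃ k, gk k '' A') + μ (Set.range ((↑) : ℚ → ℝ) ∪ {tgold}) := measure_union_le _ _
        _ = μ (⋃ k, gk k '' A') := by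
            rw [hnull _ ((Set.countable_range _).union (Set.countable_singleton _)), add_zero]
    · exact measure_mono hsub1
  -- change of variables
  have hpiece : ∀ k, μ (gk k '' A') = ∫⁻ y in A', ENNReal.ofReal (1/(ak k y * ak (k+2) y)) := by
    intro k
    rw [hμdef, withDensity_apply d (hmeasimg k)]
    have hderiv : ∀ y ∈ A', HasDerivWithinAt (gk k)
        ((((Nat.fib (k+1):ℝ) * Nat.fib (k+1) - (Nat.fib k : ℝ) * Nat.fib (k+2))) / (ak (k+1) y)^2) A' y := by
      intro y hy
      have hy0 := (hA'sub hy).1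
      have hden := ak_pos (k+1) hy0
      have h1 : HasDerivAt (fun z : ℝ => (Nat.fib (k+1):ℝ) * z + Nat.fib k) (Nat.fib (k+1):ℝ) y := by
        simpa using ((hasDerivAt_id y).const_mul ((Nat.fib (k+1):ℝ))).add_const ((Nat.fib k : ℝ))
      have h2 : HasDerivAt (fun z : ℝ => (Nat.fib (k+2):ℝ) * z + Nat.fib (k+1)) (Nat.fib (k+2):ℝ) y := by
        simpa using ((hasDerivAt_id y).const_mul ((Nat.fib (k+2):ℝ))).add_const ((Nat.fib (k+1) : ℝ))
      have h3 := h1.div h2 (by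
        show (Nat.fib (k+2):ℝ) * y + (Nat.fib (k+1):ℝ) ≠ 0
        exact ne_of_gt (gk_den_pos k hy0))
      have h4 : ((Nat.fib (k+1):ℝ) * ((Nat.fib (k+2):ℝ) * y + Nat.fib (k+1))
          - ((Nat.fib (k+1):ℝ) * y + Nat.fib k) * (Nat.fib (k+2):ℝ))
          / ((Nat.fib (k+2):ℝ) * y + Nat.fib (k+1))^2
          = (((Nat.fib (k+1):ℝ) * Nat.fib (k+1) - (Nat.fib k : ℝ) * Nat.fib (k+2))) / (ak (k+1) y)^2 := by
        have : ak (k+1) y = (Nat.fib (k+2):ℝ) * y + Nat.fib (k+1) := rfl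
        rw [this]
        congr 1
        ring
      rw [h4] at h3
      exact h3.hasDerivWithinAt
    rw [lintegral_image_1d hA'meas hderiv (hinj k) d]
    apply setLIntegral_congr_fun hA'meas
    intro y hy
    beta_reduce
    have hy0 := (hA'sub hy).1
    have p0 := ak_pos k hy0
    have p1 := ak_pos (k+1) hy0
    have p2 := ak_pos (k+2) hy0
    have habs : |(((Nat.fib (k+1):ℝ) * Nat.fib (k+1) - (Nat.fib k : ℝ) * Nat.fib (k+2))) / (ak (k+1) y)^2|
        = 1 / (ak (k+1) y)^2 := by
      rw [abs_div, abs_of_pos (by positivity : (0:ℝ) < (ak (k+1) y)^2), cassiniR k]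
      congr 1
      rcases Nat.even_or_odd k with he | ho
      · rw [he.neg_one_pow]; norm_num
      · rw [ho.neg_one_pow]; norm_num
    rw [habs, hddef]
    show ENNReal.ofReal (1 / (ak (k+1) y)^2) * ENNReal.ofReal (1/(gk k y * (gk k y + 1)))
        = ENNReal.ofReal (1/(ak k y * ak (k+2) y))
    have hgg : gk k y * (gk k y + 1) = (ak k y * ak (k+2) y) / (ak (k+1) y)^2 := by
      rw [gk_eq_ak, ak_rec k y]
      field_simp
    rw [← ENNReal.ofReal_mul (by positivity), hgg]
    congr 1
    rw [one_div_div]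
    have h1 : ak (k+1) y ≠ 0 := ne_of_gt p1
    have h2 : ak k y * ak (k+2) y ≠ 0 := ne_of_gt (mul_pos p0 p2)
    field_simp
  -- summing up
  have hmeasterm : ∀ k : ℕ, Measurable (fun y : ℝ => ENNReal.ofReal (1/(ak k y * ak (k+2) y))) := by
    intro k
    apply Measurable.ennreal_ofReal
    apply Measurable.div measurable_const
    apply Measurable.mul
    · exact ((measurable_id.const_mul _).add_const _)
    · exact ((measurable_id.const_mul _).add_const _)
  calc μ (T ⁻¹' A ∩ Ioo 0 1) = μ (⋃ k, gk k '' A') := hE2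
    _ = ∑' k, μ (gk k '' A') := measure_iUnion hdisj hmeasimg
    _ = ∑' k, ∫⁻ y in A', ENNReal.ofReal (1/(ak k y * ak (k+2) y)) := by
        congr 1; funext k; exact hpiece k
    _ = ∫⁻ y in A', ∑' k, ENNReal.ofReal (1/(ak k y * ak (k+2) y)) := by
        rw [lintegral_tsum (fun k => (hmeasterm k).aemeasurable)]
    _ = ∫⁻ y in A', d y := by
        apply setLIntegral_congr_fun hA'meas
        intro y hy
        beta_reduce
        rw [tsum_term (hA'sub hy), hddef]
    _ = μ A' := (withDensity_apply d hA'meas).symm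
    _ = μ A := hAA'.symm
end

section
/- Let a = [0; n₁, n₂, ...] be irrational in (0,1), and let x ∈ (0,1) be a real whose continued fraction coincides with that of a exactly up to the k-th partial quotient (and differs at the (k+1)-st). Set N = n₁ + ... + n_{k+3} and μ = N/(k+3). Then |a - x| > (1/24)·(2μ)^{-2(k+3)}. -/
lemma cfEval_mem (L : List ℕ) (hL : ∀ c ∈ L, 1 ≤ c) {t : ℝ}
    (ht : t ∈ Set.Icc (0:ℝ) 1) : cfEval L t ∈ Set.Icc (0:ℝ) 1 := by
  induction L with
  | nil => exact ht
  | cons c L ih =>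
    have hc : (1:ℝ) ≤ c := by exact_mod_cast hL c (List.mem_cons_self)
    have hv := ih (fun d hd => hL d (List.mem_cons_of_mem _ hd))
    have h1 : (1:ℝ) ≤ (c:ℝ) + cfEval L t := by linarith [hv.1]
    refine ⟨div_nonneg (by norm_num) (by linarith), ?_⟩
    rw [show cfEval (c::L) t = 1 / ((c:ℝ) + cfEval L t) from rfl,
      div_le_one (by linarith)]
    linarith

lemma prod_sq_nonneg (L : List ℕ) : 0 ≤ (L.map fun c : ℕ => ((1:ℝ) + c)^2).prod := by
  induction L with
  | nil => simp
  | cons c L ih =>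
    rw [List.map_cons, List.prod_cons]
    exact mul_nonneg (sq_nonneg _) ih

lemma cfEval_diff (L : List ℕ) (hL : ∀ c ∈ L, 1 ≤ c) {s t : ℝ}
    (hs : s ∈ Set.Icc (0:ℝ) 1) (ht : t ∈ Set.Icc (0:ℝ) 1) :
    |s - t| ≤ (L.map fun c : ℕ => ((1:ℝ) + c)^2).prod * |cfEval L s - cfEval L t| := by
  induction L with
  | nil => simp [cfEval]
  | cons c L ih =>
    have hc : (1:ℝ) ≤ c := by exact_mod_cast hL c (List.mem_cons_self)
    have hL' : ∀ d ∈ L, 1 ≤ d := fun d hd => hL d (List.mem_cons_of_mem _ hd)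
    have hS := cfEval_mem L hL' hs
    have hT := cfEval_mem L hL' ht
    set S := cfEval L s with hSdef
    set T := cfEval L t with hTdef
    have h1 : (0:ℝ) < c + S := by linarith [hS.1]
    have h2 : (0:ℝ) < c + T := by linarith [hT.1]
    have hdiff : cfEval (c::L) s - cfEval (c::L) t = (T - S)/(((c:ℝ)+S)*((c:ℝ)+T)) := by
      show 1 / ((c:ℝ) + S) - 1 / ((c:ℝ) + T) = _
      rw [div_sub_div _ _ (ne_of_gt h1) (ne_of_gt h2)]
      ring_nf
    have habs : |cfEval (c::L) s - cfEval (c::L) t| = |S - T| / (((c:ℝ)+S)*((c:ℝ)+T)) := by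
      rw [hdiff, abs_div, abs_of_pos (mul_pos h1 h2), abs_sub_comm]
    have hden : ((c:ℝ)+S)*((c:ℝ)+T) ≤ ((1:ℝ)+c)^2 := by nlinarith [hS.2, hT.2, hS.1, hT.1]
    have key : |S - T| ≤ ((1:ℝ)+c)^2 * |cfEval (c::L) s - cfEval (c::L) t| := by
      rw [habs]
      have hq : 0 ≤ |S - T| / (((c:ℝ)+S)*((c:ℝ)+T)) :=
        div_nonneg (abs_nonneg _) (le_of_lt (mul_pos h1 h2))
      have hST : |S - T| = (((c:ℝ)+S)*((c:ℝ)+T)) * (|S - T| / (((c:ℝ)+S)*((c:ℝ)+T))) := by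
        field_simp
      nlinarith [mul_le_mul_of_nonneg_right hden hq]
    calc |s - t| ≤ (L.map fun c : ℕ => ((1:ℝ) + c)^2).prod * |S - T| := ih hL'
      _ ≤ (L.map fun c : ℕ => ((1:ℝ) + c)^2).prod *
            (((1:ℝ)+c)^2 * |cfEval (c::L) s - cfEval (c::L) t|) :=
          mul_le_mul_of_nonneg_left key (prod_sq_nonneg L)
      _ = ((c::L).map fun c : ℕ => ((1:ℝ) + c)^2).prod * |cfEval (c::L) s - cfEval (c::L) t| := by
          rw [List.map_cons, List.prod_cons]; ring

lemma cfEval_append (L : List ℕ) (c : ℕ) (t : ℝ) :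
    cfEval (L ++ [c]) t = cfEval L (1 / ((c:ℝ) + t)) := by
  induction L with
  | nil => rfl
  | cons d L ih =>
      simp only [List.cons_append, cfEval]
      rw [ih]

lemma list_prod_range (f : ℕ → ℝ) (k : ℕ) :
    ((List.range k).map f).prod = ∏ i ∈ Finset.range k, f i := by
  induction k with
  | zero => simp
  | succ k ih =>
      rw [List.range_succ, List.map_append, List.prod_append, Finset.prod_range_succ, ih]
      simp

lemma amgm (K : ℕ) (hK : 0 < K) (z : ℕ → ℝ) (hz : ∀ i, 1 ≤ z i) :
    ∏ i ∈ Finset.range K, z i ≤ ((∑ i ∈ Finset.range K, z i) / K) ^ K := by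
  have hKpos : (0:ℝ) < K := by exact_mod_cast hK
  have hznn : ∀ i ∈ Finset.range K, (0:ℝ) ≤ z i := fun i _ => le_trans zero_le_one (hz i)
  have h := Real.geom_mean_le_arith_mean_weighted (Finset.range K)
    (fun _ => 1/(K:ℝ)) z (fun i _ => by positivity)
    (by simp; field_simp) hznn
  have hprod : (∏ i ∈ Finset.range K, z i ^ (1/(K:ℝ))) =
      (∏ i ∈ Finset.range K, z i) ^ (1/(K:ℝ)) :=
    Real.finset_prod_rpow _ _ hznn _
  have hsum : (∑ i ∈ Finset.range K, (1/(K:ℝ)) * z i) =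
      (∑ i ∈ Finset.range K, z i) / K := by
    rw [← Finset.mul_sum]; ring
  rw [hprod, hsum] at h
  have hPnn : (0:ℝ) ≤ ∏ i ∈ Finset.range K, z i := Finset.prod_nonneg hznn
  have := pow_le_pow_left₀ (Real.rpow_nonneg hPnn _) h K
  rwa [← Real.rpow_natCast ((∏ i ∈ Finset.range K, z i) ^ (1/(K:ℝ))) K,
    ← Real.rpow_mul hPnn, one_div, inv_mul_cancel₀ (ne_of_gt hKpos),
    Real.rpow_one] at this

lemma key_gap (A B C mr u t1 t2 t3 : ℝ)
    (hA : 1 ≤ A) (hB : 1 ≤ B) (hC : 1 ≤ C) (hmr : 1 ≤ mr)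
    (hu0 : 0 ≤ u) (hu1 : u < 1)
    (ht1 : 0 < t1) (ht1' : t1 < 1) (ht2 : 0 < t2) (ht2' : t2 < 1)
    (ht3 : 0 < t3) (ht3' : t3 < 1)
    (e1 : t1 = 1/(B + t2)) (e2 : t2 = 1/(C + t3))
    (hcase : mr + 1 ≤ A ∨ A + 1 ≤ mr) :
    1/((1+A)^2 * ((1+B)*(1+C))) < |1/(A + t1) - 1/(mr + u)| := by
  have hAt1 : (0:ℝ) < A + t1 := by linarith
  have hmu : (0:ℝ) < mr + u := by linarith
  have ht2lb : 1/(C+1) < t2 := by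
    rw [e2]; exact one_div_lt_one_div_of_lt (by linarith) (by linarith)
  have ht1lb : 1/(B+1) < t1 := by
    rw [e1]; exact one_div_lt_one_div_of_lt (by linarith) (by linarith)
  have h1mt1 : 1/((1+B)*(1+C)) < 1 - t1 := by
    have hBt2 : (0:ℝ) < B + t2 := by linarith
    have hnum : (0:ℝ) < B + t2 - 1 := by linarith
    have hrw : (1:ℝ) - t1 = (B + t2 - 1)/(B + t2) := by
      rw [e1]; field_simp
    rw [hrw]
    calc 1/((1+B)*(1+C)) = (1/(C+1))/(B+1) := by rw [div_div]; congr 1; ring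
      _ < t2/(B+1) := (div_lt_div_iff_of_pos_right (by linarith)).2 ht2lb
      _ ≤ (B + t2 - 1)/(B+1) := (div_le_div_iff_of_pos_right (by linarith)).2 (by linarith)
      _ ≤ (B + t2 - 1)/(B + t2) :=
          div_le_div_of_nonneg_left (le_of_lt hnum) hBt2 (by linarith)
  rcases hcase with hcase | hcase
  · have hsgt : 1/A < 1/(mr + u) := one_div_lt_one_div_of_lt hmu (by linarith)
    have hApos : (0:ℝ) < A := by linarith
    have hkey : 1/((1+A)^2*((1+B)*(1+C))) < 1/(mr+u) - 1/(A+t1) := by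
      have hden : A*(A+t1) ≤ (1+A)^2 := by nlinarith
      have hmid : 1/A - 1/(A+t1) = t1/(A*(A+t1)) := by
        field_simp
        ring
      calc 1/((1+A)^2*((1+B)*(1+C))) ≤ 1/((1+A)^2*(1+B)) := by
            apply one_div_le_one_div_of_le (by positivity)
            nlinarith [mul_nonneg (mul_nonneg (sq_nonneg (1+A)) (by linarith : (0:ℝ) ≤ 1+B))
              (by linarith : (0:ℝ) ≤ C)]
        _ = (1/(B+1))/(1+A)^2 := by rw [div_div]; congr 1; ring
        _ < t1/(1+A)^2 := (div_lt_div_iff_of_pos_right (by positivity)).2 ht1lb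
        _ ≤ t1/(A*(A+t1)) :=
            div_le_div_of_nonneg_left (le_of_lt ht1) (by positivity) hden
        _ = 1/A - 1/(A+t1) := hmid.symm
        _ ≤ 1/(mr+u) - 1/(A+t1) := by linarith
    have hpos : 0 < 1/(mr+u) - 1/(A+t1) := lt_trans (by positivity) hkey
    rw [abs_sub_comm, abs_of_pos hpos]
    exact hkey
  · have hsle : 1/(mr+u) ≤ 1/(A+1) := one_div_le_one_div_of_le (by linarith) (by linarith)
    have hkey : 1/((1+A)^2*((1+B)*(1+C))) < 1/(A+t1) - 1/(mr+u) := by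
      have hden : (A+t1)*(A+1) ≤ (1+A)^2 := by nlinarith
      have hmid : 1/(A+t1) - 1/(A+1) = (1-t1)/((A+t1)*(A+1)) := by
        field_simp
        ring
      calc 1/((1+A)^2*((1+B)*(1+C))) = (1/((1+B)*(1+C)))/(1+A)^2 := by
            rw [div_div]; congr 1; ring
        _ < (1-t1)/(1+A)^2 := (div_lt_div_iff_of_pos_right (by positivity)).2 h1mt1
        _ ≤ (1-t1)/((A+t1)*(A+1)) :=
            div_le_div_of_nonneg_left (by linarith) (by positivity) hden
        _ = 1/(A+t1) - 1/(A+1) := hmid.symm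
        _ ≤ 1/(A+t1) - 1/(mr+u) := by linarith
    have hpos : 0 < 1/(A+t1) - 1/(mr+u) := lt_trans (by positivity) hkey
    rw [abs_of_pos hpos]
    exact hkey

lemma aux_prod_sq (b c : ℝ) (hb : 1 ≤ b) (hc : 1 ≤ c) : b*c ≤ b^2*c^2 := by
  have h1 : 1 ≤ b*c := by nlinarith
  nlinarith [h1]

/-- If the continued fractions of the irrational `a = [0; n₁, n₂, …]` and of
`x ∈ (0,1)` coincide exactly up to the `k`-th partial quotient (differing at
the `(k+1)`-st), then with `N = n₁ + ⋯ + n_{k+3}` and `μ = N/(k+3)` one has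
`|a - x| > (1/24)·(2μ)^{-2(k+3)}`. -/
theorem jimm_lower_distance_bound
    (n : ℕ → ℕ) (hn : ∀ i, 1 ≤ n i)
    (a : ℝ) (hairr : Irrational a)
    (t : ℕ → ℝ) (ht0 : t 0 = a)
    (htmem : ∀ j, t j ∈ Set.Ioo (0 : ℝ) 1)
    (hrec : ∀ j, t j = 1 / ((n (j + 1) : ℝ) + t (j + 1)))
    (k : ℕ) (x : ℝ) (hx : x ∈ Set.Ioo (0 : ℝ) 1)
    (m : ℕ) (hm : 1 ≤ m) (hne : m ≠ n (k + 1))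
    (u : ℝ) (hu : u ∈ Set.Ico (0 : ℝ) 1)
    (hxcf : x = cfEval ((List.range k).map fun i => n (i + 1)) (1 / ((m : ℝ) + u))) :
    |a - x| > 1 / 24 *
      ((2 * ((∑ i ∈ Finset.range (k + 3), (n (i + 1) : ℝ)) / (k + 3))) ^ (2 * (k + 3)))⁻¹ := by
  have hLmem : ∀ c ∈ (List.range k).map fun i => n (i + 1), 1 ≤ c := by
    intro c hc
    obtain ⟨i, -, rfl⟩ := List.mem_map.1 hc
    exact hn _
  have ha : ∀ j, a = cfEval ((List.range j).map fun i => n (i + 1)) (t j) := by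
    intro j
    induction j with
    | zero => simp [cfEval, ht0]
    | succ j ih =>
        rw [List.range_succ, List.map_append, List.map_cons, List.map_nil,
          cfEval_append, ← hrec j]
        exact ih
  have hm1 : (1:ℝ) ≤ m := by exact_mod_cast hm
  have hmu : (0:ℝ) < (m:ℝ) + u := by linarith [hu.1]
  have hs01 : 1 / ((m:ℝ) + u) ∈ Set.Icc (0:ℝ) 1 := by
    constructor
    · positivity
    · rw [div_le_one hmu]; linarith [hu.1]
  have htk : t k ∈ Set.Icc (0:ℝ) 1 := ⟨le_of_lt (htmem k).1, le_of_lt (htmem k).2⟩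
  have hdiff := cfEval_diff _ hLmem htk hs01
  rw [← ha k, ← hxcf] at hdiff
  have hA : (1:ℝ) ≤ (n (k+1) : ℝ) := by exact_mod_cast hn (k+1)
  have hB : (1:ℝ) ≤ (n (k+2) : ℝ) := by exact_mod_cast hn (k+2)
  have hC : (1:ℝ) ≤ (n (k+3) : ℝ) := by exact_mod_cast hn (k+3)
  have hcase : (m:ℝ) + 1 ≤ (n (k+1):ℝ) ∨ (n (k+1):ℝ) + 1 ≤ (m:ℝ) := by
    rcases lt_or_gt_of_ne hne with h | h
    · left; exact_mod_cast Nat.succ_le_of_lt h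
    · right; exact_mod_cast Nat.succ_le_of_lt h
  have hgap : 1/((1+(n (k+1):ℝ))^2 * ((1+(n (k+2):ℝ))*(1+(n (k+3):ℝ)))) <
      |t k - 1/((m:ℝ)+u)| := by
    rw [hrec k]
    exact key_gap _ _ _ _ _ _ _ _ hA hB hC hm1 hu.1 hu.2
      (htmem (k+1)).1 (htmem (k+1)).2 (htmem (k+2)).1 (htmem (k+2)).2
      (htmem (k+3)).1 (htmem (k+3)).2 (hrec (k+1)) (hrec (k+2)) hcase
  have hfac : ∀ i, (1:ℝ) ≤ (1 + (n (i+1):ℝ))^2 := by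
    intro i
    have h0 : (0:ℝ) ≤ (n (i+1):ℝ) := Nat.cast_nonneg _
    nlinarith
  have hPeq : ((((List.range k).map fun i => n (i + 1)).map fun c : ℕ => ((1:ℝ)+c)^2)).prod
      = ∏ i ∈ Finset.range k, (1+(n (i+1):ℝ))^2 := by
    rw [List.map_map, list_prod_range]
    simp [Function.comp]
  rw [hPeq] at hdiff
  set P := ∏ i ∈ Finset.range k, (1+(n (i+1):ℝ))^2 with hPdef
  have hP1 : (1:ℝ) ≤ P := by
    rw [hPdef]
    have := Finset.prod_le_prod (s := Finset.range k) (f := fun _ => (1:ℝ))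
      (g := fun i => (1+(n (i+1):ℝ))^2) (fun i _ => zero_le_one) (fun i _ => hfac i)
    simpa using this
  have hPpos : (0:ℝ) < P := lt_of_lt_of_le one_pos hP1
  set E := (1+(n (k+1):ℝ))^2 * ((1+(n (k+2):ℝ))*(1+(n (k+3):ℝ))) with hEdef
  have hEpos : 0 < E := by rw [hEdef]; positivity
  have h1 : 1/(E*P) < |a - x| := by
    have h2 : |t k - 1/((m:ℝ)+u)| / P ≤ |a - x| := by
      rw [div_le_iff₀ hPpos]
      calc |t k - 1/((m:ℝ)+u)| ≤ P * |a - x| := hdiff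
        _ = |a - x| * P := mul_comm _ _
    have h3 : 1/(E*P) < |t k - 1/((m:ℝ)+u)|/P := by
      rw [show 1/(E*P) = (1/E)/P by rw [div_div]]
      exact (div_lt_div_iff_of_pos_right hPpos).2 hgap
    linarith
  set Q := ∏ i ∈ Finset.range (k+3), (1+(n (i+1):ℝ))^2 with hQdef
  have hQeq : Q = P * ((1+(n (k+1):ℝ))^2 * (1+(n (k+2):ℝ))^2 * (1+(n (k+3):ℝ))^2) := by
    rw [hQdef, Finset.prod_range_succ, Finset.prod_range_succ, Finset.prod_range_succ, hPdef]
    simp only [show k+1+1 = k+2 from rfl, show k+2+1 = k+3 from rfl]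
    ring
  have hEP : E*P ≤ Q := by
    rw [hQeq, hEdef]
    have h4 : (1+(n (k+2):ℝ))*(1+(n (k+3):ℝ)) ≤ (1+(n (k+2):ℝ))^2*(1+(n (k+3):ℝ))^2 :=
      aux_prod_sq _ _ (by linarith) (by linarith)
    calc (1+(n (k+1):ℝ))^2 * ((1+(n (k+2):ℝ))*(1+(n (k+3):ℝ))) * P
        ≤ (1+(n (k+1):ℝ))^2 * ((1+(n (k+2):ℝ))^2*(1+(n (k+3):ℝ))^2) * P :=
          mul_le_mul_of_nonneg_right
            (mul_le_mul_of_nonneg_left h4 (sq_nonneg _)) (le_of_lt hPpos)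
      _ = P * ((1+(n (k+1):ℝ))^2 * (1+(n (k+2):ℝ))^2 * (1+(n (k+3):ℝ))^2) := by ring
  set S := ∑ i ∈ Finset.range (k + 3), (n (i + 1) : ℝ) with hSdef
  set μ := S / ((k:ℝ) + 3) with hmudef
  have hcast : ((k+3 : ℕ):ℝ) = (k:ℝ) + 3 := by push_cast; ring
  have hSge : ((k:ℝ) + 3) ≤ S := by
    rw [hSdef]
    calc ((k:ℝ) + 3) = ∑ _i ∈ Finset.range (k+3), (1:ℝ) := by
          rw [Finset.sum_const, Finset.card_range, nsmul_eq_mul, mul_one, hcast]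
      _ ≤ ∑ i ∈ Finset.range (k+3), (n (i+1):ℝ) :=
          Finset.sum_le_sum (fun i _ => by exact_mod_cast hn (i+1))
  have hmu1 : (1:ℝ) ≤ μ := by
    rw [hmudef, le_div_iff₀ (by positivity)]
    linarith
  have hstep : ∏ i ∈ Finset.range (k+3), (1+(n (i+1):ℝ)) ≤ (2*μ)^(k+3) := by
    calc ∏ i ∈ Finset.range (k+3), (1+(n (i+1):ℝ))
        ≤ ∏ i ∈ Finset.range (k+3), (2*(n (i+1):ℝ)) := by
          apply Finset.prod_le_prod
          · intro i _; have : (0:ℝ) ≤ (n (i+1):ℝ) := Nat.cast_nonneg _; linarith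
          · intro i _
            have h1n : (1:ℝ) ≤ (n (i+1):ℝ) := by exact_mod_cast hn (i+1)
            linarith
      _ = 2^(k+3) * ∏ i ∈ Finset.range (k+3), (n (i+1):ℝ) := by
          rw [Finset.prod_mul_distrib, Finset.prod_const, Finset.card_range]
      _ ≤ 2^(k+3) * ((S/((k+3 : ℕ):ℝ))^(k+3)) := by
          apply mul_le_mul_of_nonneg_left _ (by positivity)
          exact amgm (k+3) (by omega) (fun i => (n (i+1):ℝ))
            (fun i => show (1:ℝ) ≤ (n (i+1):ℝ) from by exact_mod_cast hn (i+1))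
      _ = (2*μ)^(k+3) := by
          rw [← mul_pow]
          congr 1
          rw [hmudef, hcast]
  have hprodnn : (0:ℝ) ≤ ∏ i ∈ Finset.range (k+3), (1+(n (i+1):ℝ)) :=
    Finset.prod_nonneg (fun i _ => by positivity)
  have hQle : Q ≤ (2*μ)^(2*(k+3)) := by
    have hQ2 : Q = (∏ i ∈ Finset.range (k+3), (1+(n (i+1):ℝ)))^2 := by
      rw [hQdef, ← Finset.prod_pow]
    calc Q = (∏ i ∈ Finset.range (k+3), (1+(n (i+1):ℝ)))^2 := hQ2
      _ ≤ ((2*μ)^(k+3))^2 := pow_le_pow_left₀ hprodnn hstep 2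
      _ = (2*μ)^(2*(k+3)) := by rw [← pow_mul, Nat.mul_comm]
  have hQpos : (0:ℝ) < Q := by
    have : (1:ℝ) ≤ Q := by
      rw [hQdef]
      have := Finset.prod_le_prod (s := Finset.range (k+3)) (f := fun _ => (1:ℝ))
        (g := fun i => (1+(n (i+1):ℝ))^2) (fun i _ => zero_le_one) (fun i _ => hfac i)
      simpa using this
    linarith
  have hpowpos : (0:ℝ) < (2*μ)^(2*(k+3)) := lt_of_lt_of_le hQpos hQle
  have hinv : ((2*μ)^(2*(k+3)))⁻¹ ≤ 1/Q := by
    rw [inv_eq_one_div]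
    exact one_div_le_one_div_of_le hQpos hQle
  have h5 : 1/Q ≤ 1/(E*P) :=
    one_div_le_one_div_of_le (mul_pos hEpos hPpos) hEP
  have hfin : ((2*μ)^(2*(k+3)))⁻¹ < |a - x| := lt_of_le_of_lt (hinv.trans h5) h1
  have hinvpos : (0:ℝ) < ((2*μ)^(2*(k+3)))⁻¹ := by positivity
  linarith
end
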